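/- The η-temperature softmax map is (5/η)-Lipschitz from the ℓ∞ norm to the ℓ₁ norm: for all λ, λ' ∈ ℝⁿ, ‖σ(λ) − σ(λ')‖₁ ≤ (5/η) ‖λ − λ'‖_∞. -/

import Mathlib

/-!
Shifting the logits by at most `t` in sup norm changes each numerator `exp (x k)` and the
normalising sum by a factor in `[exp (-t), exp t]`, so every softmax entry changes by a factor in
`[exp (-2t), exp (2t)]`. Summing `|p k - q k| ≤ (exp (2t) - 1) p k` gives an ℓ₁ distance of at most
`exp (2t) - 1`, while the distance of two probability vectors is at most `2`; and
`min 2 (exp (2t) - 1) ≤ 5t`.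
-/

open Finset Real

noncomputable def softmax {ι : Type*} [Fintype ι] (x : ι → ℝ) (k : ι) : ℝ :=
  exp (x k) / ∑ j, exp (x j)

lemma abs_sub_le_sub_one_mul_of_le_mul {p q E : ℝ} (hE : 1 ≤ E)
    (hqp : q ≤ E * p) (hpq : p ≤ E * q) : |p - q| ≤ (E - 1) * p := by
  rw [abs_sub_le_iff]
  constructor
  · nlinarith
  · linarith

lemma min_two_exp_two_mul_sub_one_le {t : ℝ} (ht : 0 ≤ t) : min 2 (exp (2 * t) - 1) ≤ 5 * t := by
  rcases le_or_gt (2 / 5) t with hbig | hsmall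
  · exact (min_le_left _ _).trans (by linarith)
  · have hquad := abs_exp_sub_one_sub_id_le (x := 2 * t)
      (by rw [abs_of_nonneg (by linarith)]; linarith)
    exact (min_le_right _ _).trans (by nlinarith [(abs_le.mp hquad).2])

section Softmax

variable {ι : Type*} [Fintype ι]

lemma softmax_nonneg (x : ι → ℝ) (k : ι) : 0 ≤ softmax x k := by
  unfold softmax; positivity

lemma sum_softmax_le_one (x : ι → ℝ) : ∑ k, softmax x k ≤ 1 := by
  simp only [softmax, ← sum_div]
  exact div_self_le_one _

lemma softmax_le_exp_mul_softmax {x y : ι → ℝ} {t : ℝ} (h : ∀ j, |x j - y j| ≤ t) (k : ι) :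
    softmax y k ≤ exp (2 * t) * softmax x k := by
  have hexp : ∀ {a b : ℝ}, |a - b| ≤ t → exp a ≤ exp t * exp b := fun hab => by
    rw [← exp_add]; exact exp_le_exp.mpr (by linarith [(abs_le.mp hab).2])
  have hSx : 0 < ∑ j, exp (x j) := sum_pos (fun j _ => exp_pos _) ⟨k, mem_univ k⟩
  have hSy : 0 < ∑ j, exp (y j) := sum_pos (fun j _ => exp_pos _) ⟨k, mem_univ k⟩
  have hden : ∑ j, exp (x j) ≤ exp t * ∑ j, exp (y j) := by
    rw [mul_sum]; exact sum_le_sum fun j _ => hexp (h j)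
  unfold softmax
  rw [div_le_iff₀ hSy]
  calc exp (y k) ≤ exp t * exp (x k) := hexp (by rw [abs_sub_comm]; exact h k)
    _ ≤ exp t * exp (x k) * ((exp t * ∑ j, exp (y j)) / ∑ j, exp (x j)) :=
        le_mul_of_one_le_right (by positivity) ((one_le_div hSx).mpr hden)
    _ = exp (2 * t) * (exp (x k) / ∑ j, exp (x j)) * ∑ j, exp (y j) := by
        rw [two_mul, exp_add]; ring

lemma sum_abs_softmax_sub_le_exp_sub_one {x y : ι → ℝ} {t : ℝ} (ht : 0 ≤ t)
    (h : ∀ j, |x j - y j| ≤ t) :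
    ∑ k, |softmax x k - softmax y k| ≤ exp (2 * t) - 1 := by
  have h' : ∀ j, |y j - x j| ≤ t := fun j => by rw [abs_sub_comm]; exact h j
  have hE : 1 ≤ exp (2 * t) := one_le_exp (by linarith)
  calc ∑ k, |softmax x k - softmax y k| ≤ ∑ k, (exp (2 * t) - 1) * softmax x k :=
        sum_le_sum fun k _ => abs_sub_le_sub_one_mul_of_le_mul hE
          (softmax_le_exp_mul_softmax h k) (softmax_le_exp_mul_softmax h' k)
    _ = (exp (2 * t) - 1) * ∑ k, softmax x k := (mul_sum _ _ _).symm
    _ ≤ exp (2 * t) - 1 := mul_le_of_le_one_right (by linarith) (sum_softmax_le_one x)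

lemma sum_abs_softmax_sub_le_two (x y : ι → ℝ) : ∑ k, |softmax x k - softmax y k| ≤ 2 :=
  calc ∑ k, |softmax x k - softmax y k| ≤ ∑ k, (softmax x k + softmax y k) :=
        sum_le_sum fun k _ => abs_sub_le_iff.mpr
          ⟨by linarith [softmax_nonneg y k], by linarith [softmax_nonneg x k]⟩
    _ ≤ 2 := by rw [sum_add_distrib]; linarith [sum_softmax_le_one x, sum_softmax_le_one y]

lemma sum_abs_softmax_sub_le (x y : ι → ℝ) :
    ∑ k, |softmax x k - softmax y k| ≤ 5 * ‖x - y‖ := by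
  have h : ∀ j, |x j - y j| ≤ ‖x - y‖ := fun j => by
    simpa only [Real.norm_eq_abs, Pi.sub_apply] using norm_le_pi_norm (x - y) j
  exact (le_min (sum_abs_softmax_sub_le_two x y)
    (sum_abs_softmax_sub_le_exp_sub_one (norm_nonneg _) h)).trans
    (min_two_exp_two_mul_sub_one_le (norm_nonneg _))

end Softmax

theorem softmax_lipschitz_linf_l1_general (n : ℕ) (η : ℝ) (hη : 0 < η)
    (c : Fin n → ℝ) (σ : (Fin n → ℝ) → Fin n → ℝ)
    (hσ : ∀ lam k, σ lam k
      = Real.exp ((lam k - c k) / η) / ∑ j, Real.exp ((lam j - c j) / η)) :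
    ∀ lam lam' : Fin n → ℝ,
      ∑ k, |σ lam k - σ lam' k| ≤ (5 / η) * ‖lam - lam'‖ := by
  intro lam lam'
  have hσ_eq : ∀ μ, σ μ = softmax (η⁻¹ • (μ - c)) := fun μ => funext fun k => by
    simp only [hσ, softmax, Pi.smul_apply, Pi.sub_apply, smul_eq_mul, div_eq_inv_mul]
  calc ∑ k, |σ lam k - σ lam' k| ≤ 5 * ‖η⁻¹ • (lam - c) - η⁻¹ • (lam' - c)‖ := by
        simpa only [hσ_eq] using sum_abs_softmax_sub_le _ _
    _ = 5 / η * ‖lam - lam'‖ := by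
        rw [← smul_sub, sub_sub_sub_cancel_right, norm_smul, Real.norm_eq_abs, abs_inv,
          abs_of_pos hη]
        ring

/-- the η-temperature softmax map is (5/η)-Lipschitz from the ℓ∞ norm to the
ℓ₁ norm.  Here `‖lam - lam'‖` is the sup (ℓ∞) norm on `Fin n → ℝ` and the ℓ₁ norm is written
out as a sum of absolute values. -/
theorem softmax_lipschitz_linf_l1 (n : ℕ) (hn : 1 ≤ n) (η : ℝ) (hη : 0 < η)
    (c : Fin n → ℝ) (σ : (Fin n → ℝ) → Fin n → ℝ)
    (hσ : ∀ lam k, σ lam k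
      = Real.exp ((lam k - c k) / η) / ∑ j, Real.exp ((lam j - c j) / η)) :
    ∀ lam lam' : Fin n → ℝ,
      ∑ k, |σ lam k - σ lam' k| ≤ (5 / η) * ‖lam - lam'‖ :=
  softmax_lipschitz_linf_l1_general n η hη c σ hσ
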